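/- Let d≥2, K(x):=x/|x|^d, α∈(0,1), and p∈[1, d/(d−1+α)). Then K belongs to the local fractional Sobolev space W^{α,p}_loc(ℝ^d;ℝ^d): for every R>0, ∫_{B_R}∫_{B_R} |K(x)−K(y)|^p / |x−y|^{d+αp} dx dy < ∞ (and K∈L^p(B_R;ℝ^d)). -/

import Mathlib

/-!
Write `a = ‖x‖`, `b = ‖y‖`, `r = ‖x - y‖` and `2β = d + p(d - 1 + α)`, so that `β < d` is exactly
the condition on `p`. Near the diagonal (`2r ≤ a`) the kernel is Lipschitz with constant
`≲ a^(-d)`, which bounds the Gagliardo integrand by `≲ a^(-β) r^(-β)`. Away from it (`a < 2r`,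
hence `b < 3r`) we only use `‖K x - K y‖ ≤ 2 max ‖K x‖ ‖K y‖` and split `r^(-(d + αp))` between
`a` and `b`, getting `≲ a^(-β) b^(-β)`. Both bounds are integrable on `B_R × B_R`, since
`‖z‖^(-β)` is integrable on balls and `B_R - B_R ⊆ B_{2R}`. For `K ∈ L^p`,
`‖K x‖^p = ‖x‖^(-(d - 1)p)` with `(d - 1)p < d`.
-/

open MeasureTheory Filter Set Metric Topology
open scoped ENNReal NNReal

noncomputable section

/-- `Ed d` is the Euclidean space `ℝ^d`. -/
abbrev Ed (d : ℕ) : Type := EuclideanSpace ℝ (Fin d)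

/-- The singular kernel `K(x) = x/|x|^d`. -/
noncomputable def kern (d : ℕ) (x : Ed d) : Ed d := (‖x‖ ^ d)⁻¹ • x

namespace Real

lemma rpow_neg_le_mul_rpow_neg {a c r t : ℝ} (ha : 0 < a) (hc : 0 < c) (har : a ≤ c * r)
    (ht : 0 ≤ t) : r ^ (-t) ≤ c ^ t * a ^ (-t) :=
  calc r ^ (-t) ≤ (a / c) ^ (-t) :=
        rpow_le_rpow_of_nonpos (div_pos ha hc) ((div_le_iff₀' hc).2 har) (neg_nonpos.2 ht)
    _ = c ^ t * a ^ (-t) := by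
        rw [div_rpow ha.le hc.le, rpow_neg hc.le, div_inv_eq_mul, mul_comm]

lemma rpow_div_rpow_le_of_le_mul_div_pow {u r a C p m β : ℝ} {n : ℕ} (hr : 0 < r)
    (hra : r ≤ a) (hu : 0 ≤ u) (hC : 0 ≤ C) (huC : u ≤ C * r / a ^ n) (hp : 0 ≤ p)
    (hmβ : m ≤ p + β) (hβ : 2 * β = m + (n - 1) * p) :
    u ^ p / r ^ m ≤ C ^ p * (a ^ (-β) * r ^ (-β)) := by
  have ha : 0 < a := hr.trans_le hra
  have hsplit : (C * r / a ^ n) ^ p / r ^ m =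
      C ^ p * (a ^ (-(n * p)) * r ^ (p - m + β) * r ^ (-β)) := by
    rw [div_rpow (by positivity) (by positivity), mul_rpow hC hr.le, ← rpow_natCast,
      ← rpow_mul ha.le, rpow_neg ha.le, mul_assoc _ (r ^ _), ← rpow_add hr,
      show p - m + β + -β = p - m by ring, rpow_sub hr]
    ring
  have hexp : a ^ (-(n * p)) * a ^ (p - m + β) = a ^ (-β) := by
    rw [← rpow_add ha]; congr 1; linarith
  calc u ^ p / r ^ m ≤ (C * r / a ^ n) ^ p / r ^ m := by gcongr
    _ = C ^ p * (a ^ (-(n * p)) * r ^ (p - m + β) * r ^ (-β)) := hsplit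
    _ ≤ C ^ p * (a ^ (-(n * p)) * a ^ (p - m + β) * r ^ (-β)) := by
        have := rpow_le_rpow hr.le hra (by linarith : 0 ≤ p - m + β)
        gcongr
    _ = C ^ p * (a ^ (-β) * r ^ (-β)) := by rw [hexp]

lemma rpow_div_rpow_le_of_le_mul {a b r c p m β : ℝ} {n : ℕ} (ha : 0 < a) (hb : 0 < b)
    (hc : 0 < c) (har : a ≤ c * r) (hbr : b ≤ c * r) (hβ0 : 0 ≤ β) (hβm : β ≤ m)
    (hβ : 2 * β = m + (n - 1) * p) :
    a ^ ((1 - n) * p) / r ^ m ≤ c ^ m * (a ^ (-β) * b ^ (-β)) := by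
  have hr : 0 < r := pos_of_mul_pos_right (ha.trans_le har) hc.le
  calc a ^ ((1 - n) * p) / r ^ m = a ^ ((1 - n) * p) * (r ^ (-(m - β)) * r ^ (-β)) := by
        rw [← rpow_add hr, div_eq_mul_inv, ← rpow_neg hr.le]; ring_nf
    _ ≤ a ^ ((1 - n) * p) * ((c ^ (m - β) * a ^ (-(m - β))) * (c ^ β * b ^ (-β))) := by
        gcongr
        · exact rpow_neg_le_mul_rpow_neg ha hc har (by linarith)
        · exact rpow_neg_le_mul_rpow_neg hb hc hbr hβ0
    _ = (c ^ (m - β) * c ^ β) * ((a ^ ((1 - n) * p) * a ^ (-(m - β))) * b ^ (-β)) := by ring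
    _ = c ^ m * (a ^ (-β) * b ^ (-β)) := by
        rw [← rpow_add hc, ← rpow_add ha]; congr 3 <;> linarith

end Real

lemma abs_inv_pow_sub_inv_pow_mul_le {a b : ℝ} (n : ℕ) (ha : 0 < a) (hb : 0 < b)
    (hab : a ≤ 2 * b) : |(a ^ n)⁻¹ - (b ^ n)⁻¹| * b ≤ n * 2 ^ n * |a - b| / a ^ n := by
  obtain _ | k := n
  · simp
  have hmax : max |b| |a| ≤ 2 * b := by
    rw [abs_of_pos ha, abs_of_pos hb]; exact max_le (by linarith) hab
  have hnum : |b ^ (k + 1) - a ^ (k + 1)| * b ≤ (k + 1) * 2 ^ (k + 1) * |a - b| * b ^ (k + 1) :=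
    calc |b ^ (k + 1) - a ^ (k + 1)| * b ≤ |b - a| * (k + 1 : ℕ) * max |b| |a| ^ k * b := by
          gcongr; exact abs_pow_sub_pow_le b a (k + 1)
      _ ≤ |a - b| * (k + 1) * (2 * b) ^ k * (2 * b) := by
          rw [abs_sub_comm]; push_cast; gcongr; linarith
      _ = (k + 1) * 2 ^ (k + 1) * |a - b| * b ^ (k + 1) := by ring
  rw [inv_sub_inv (by positivity) (by positivity), abs_div,
    abs_of_pos (by positivity : 0 < a ^ (k + 1) * b ^ (k + 1)), div_mul_eq_mul_div,
    div_le_div_iff₀ (by positivity) (by positivity)]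
  push_cast
  calc |b ^ (k + 1) - a ^ (k + 1)| * b * a ^ (k + 1)
      ≤ (k + 1) * 2 ^ (k + 1) * |a - b| * b ^ (k + 1) * a ^ (k + 1) := by gcongr
    _ = (k + 1) * 2 ^ (k + 1) * |a - b| * (a ^ (k + 1) * b ^ (k + 1)) := by ring

section Kernel

variable {E : Type*} [NormedAddCommGroup E] [NormedSpace ℝ E] (n : ℕ)

lemma norm_inv_pow_smul_le (x : E) : ‖(‖x‖ ^ n)⁻¹ • x‖ ≤ ‖x‖ ^ (1 - n : ℝ) := by
  rcases eq_or_ne x 0 with rfl | hx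
  · simpa using Real.rpow_nonneg le_rfl _
  have ha : 0 < ‖x‖ := norm_pos_iff.2 hx
  rw [norm_smul, norm_inv, norm_pow, norm_norm, Real.rpow_sub ha, Real.rpow_one,
    Real.rpow_natCast, inv_mul_eq_div]

lemma norm_inv_pow_smul_sub_inv_pow_smul_le {x y : E} (hx : x ≠ 0) (hxy : ‖x‖ ≤ 2 * ‖y‖) :
    ‖(‖x‖ ^ n)⁻¹ • x - (‖y‖ ^ n)⁻¹ • y‖ ≤ (1 + n * 2 ^ n) * ‖x - y‖ / ‖x‖ ^ n := by
  have ha : 0 < ‖x‖ := norm_pos_iff.2 hx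
  have hb : 0 < ‖y‖ := by linarith
  have hsplit : (‖x‖ ^ n)⁻¹ • x - (‖y‖ ^ n)⁻¹ • y =
      (‖x‖ ^ n)⁻¹ • (x - y) + ((‖x‖ ^ n)⁻¹ - (‖y‖ ^ n)⁻¹) • y := by module
  calc ‖(‖x‖ ^ n)⁻¹ • x - (‖y‖ ^ n)⁻¹ • y‖
      ≤ (‖x‖ ^ n)⁻¹ * ‖x - y‖ + |(‖x‖ ^ n)⁻¹ - (‖y‖ ^ n)⁻¹| * ‖y‖ := by
        rw [hsplit]
        refine (norm_add_le _ _).trans_eq ?_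
        rw [norm_smul, norm_smul, Real.norm_eq_abs, Real.norm_eq_abs,
          abs_of_pos (by positivity : 0 < (‖x‖ ^ n)⁻¹)]
    _ ≤ ‖x - y‖ / ‖x‖ ^ n + n * 2 ^ n * ‖x - y‖ / ‖x‖ ^ n := by
        rw [inv_mul_eq_div]
        gcongr
        refine (abs_inv_pow_sub_inv_pow_mul_le n ha hb hxy).trans ?_
        gcongr
        exact abs_norm_sub_norm_le x y
    _ = (1 + n * 2 ^ n) * ‖x - y‖ / ‖x‖ ^ n := by ring

variable {p m β : ℝ}

lemma norm_inv_pow_smul_sub_rpow_div_le_of_le_three_mul {x y : E} (hx : x ≠ 0) (hy : y ≠ 0)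
    (hxr : ‖x‖ ≤ 3 * ‖x - y‖) (hyr : ‖y‖ ≤ 3 * ‖x - y‖) (hp : 0 ≤ p) (hβ0 : 0 ≤ β)
    (hβm : β ≤ m) (hβ : 2 * β = m + (n - 1) * p) :
    ‖(‖x‖ ^ n)⁻¹ • x - (‖y‖ ^ n)⁻¹ • y‖ ^ p / ‖x - y‖ ^ m ≤
      2 ^ p * 3 ^ m * (‖x‖ ^ (-β) * ‖y‖ ^ (-β)) := by
  wlog hyx : ‖(‖y‖ ^ n)⁻¹ • y‖ ≤ ‖(‖x‖ ^ n)⁻¹ • x‖ generalizing x y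
  · have := this hy hx (by rwa [norm_sub_rev]) (by rwa [norm_sub_rev]) (le_of_not_ge hyx)
    rwa [norm_sub_rev, norm_sub_rev y, mul_comm (‖y‖ ^ _)] at this
  have hdiff : ‖(‖x‖ ^ n)⁻¹ • x - (‖y‖ ^ n)⁻¹ • y‖ ≤ 2 * ‖x‖ ^ (1 - n : ℝ) := by
    linarith [norm_sub_le ((‖x‖ ^ n)⁻¹ • x) ((‖y‖ ^ n)⁻¹ • y), norm_inv_pow_smul_le n x]
  calc ‖(‖x‖ ^ n)⁻¹ • x - (‖y‖ ^ n)⁻¹ • y‖ ^ p / ‖x - y‖ ^ m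
      ≤ (2 * ‖x‖ ^ (1 - n : ℝ)) ^ p / ‖x - y‖ ^ m := by gcongr
    _ = 2 ^ p * (‖x‖ ^ ((1 - n) * p) / ‖x - y‖ ^ m) := by
        rw [Real.mul_rpow zero_le_two (by positivity), ← Real.rpow_mul (norm_nonneg x)]; ring
    _ ≤ 2 ^ p * (3 ^ m * (‖x‖ ^ (-β) * ‖y‖ ^ (-β))) := by
        gcongr
        exact Real.rpow_div_rpow_le_of_le_mul (norm_pos_iff.2 hx) (norm_pos_iff.2 hy)
          three_pos hxr hyr hβ0 hβm hβ
    _ = 2 ^ p * 3 ^ m * (‖x‖ ^ (-β) * ‖y‖ ^ (-β)) := by ring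

lemma exists_norm_inv_pow_smul_sub_rpow_div_le (hp : 0 < p) (hβ0 : 0 ≤ β) (hβm : β ≤ m)
    (hmβ : m ≤ p + β) (hβ : 2 * β = m + (n - 1) * p) :
    ∃ C, ∀ x y : E, x ≠ 0 → y ≠ 0 →
      ‖(‖x‖ ^ n)⁻¹ • x - (‖y‖ ^ n)⁻¹ • y‖ ^ p / ‖x - y‖ ^ m ≤
        C * (‖x‖ ^ (-β) * (‖x - y‖ ^ (-β) + ‖y‖ ^ (-β))) := by
  refine ⟨(1 + n * 2 ^ n) ^ p + 2 ^ p * 3 ^ m, fun x y hx hy => ?_⟩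
  have hxy_le : ‖x‖ ≤ ‖x - y‖ + ‖y‖ := norm_le_norm_sub_add x y
  have hyx_le : ‖y‖ ≤ ‖x - y‖ + ‖x‖ := norm_sub_rev y x ▸ norm_le_norm_sub_add y x
  rcases eq_or_ne x y with rfl | hxy
  · rw [sub_self, norm_zero, Real.zero_rpow hp.ne', zero_div]
    positivity
  have hr : 0 < ‖x - y‖ := norm_pos_iff.2 (sub_ne_zero.2 hxy)
  have hA : 0 ≤ ‖x‖ ^ (-β) * ‖x - y‖ ^ (-β) := by positivity
  have hB : 0 ≤ ‖x‖ ^ (-β) * ‖y‖ ^ (-β) := by positivity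
  have hC₁ : 0 ≤ (1 + n * 2 ^ n : ℝ) ^ p := by positivity
  have hC₂ : (0 : ℝ) ≤ 2 ^ p * 3 ^ m := by positivity
  rw [mul_add (‖x‖ ^ (-β))]
  rcases le_or_gt (2 * ‖x - y‖) ‖x‖ with hnear | hfar
  · calc _ ≤ (1 + n * 2 ^ n : ℝ) ^ p * (‖x‖ ^ (-β) * ‖x - y‖ ^ (-β)) :=
          Real.rpow_div_rpow_le_of_le_mul_div_pow hr (by linarith) (norm_nonneg _) (by positivity)
            (norm_inv_pow_smul_sub_inv_pow_smul_le n hx (by linarith)) hp.le hmβ hβ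
      _ ≤ _ := mul_le_mul (by linarith) (by linarith) hA (by positivity)
  · calc _ ≤ 2 ^ p * 3 ^ m * (‖x‖ ^ (-β) * ‖y‖ ^ (-β)) :=
          norm_inv_pow_smul_sub_rpow_div_le_of_le_three_mul n hx hy (by linarith) (by linarith)
            hp.le hβ0 hβm hβ
      _ ≤ _ := mul_le_mul (by linarith) (by linarith) hB (by positivity)

end Kernel

section BallIntegrals

variable {E : Type*} [NormedAddCommGroup E] [MeasurableSpace E] [BorelSpace E]
  {μ : Measure E}

lemma setLIntegral_ball_sub_le [μ.IsAddLeftInvariant] [μ.IsNegInvariant] (h : E → ℝ≥0∞)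
    {R : ℝ} {x : E} (hx : x ∈ ball (0 : E) R) :
    ∫⁻ y in ball (0 : E) R, h (x - y) ∂μ ≤ ∫⁻ z in ball (0 : E) (2 * R), h z ∂μ := by
  have hsub : ∀ y ∈ ball (0 : E) R, x - y ∈ ball (0 : E) (2 * R) := fun y hy => by
    rw [mem_ball_zero_iff] at hx hy ⊢
    linarith [norm_sub_le x y]
  calc ∫⁻ y in ball (0 : E) R, h (x - y) ∂μ
      = ∫⁻ y in ball (0 : E) R, (ball (0 : E) (2 * R)).indicator h (x - y) ∂μ :=
        setLIntegral_congr_fun measurableSet_ball fun y hy =>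
          (indicator_of_mem (hsub y hy) h).symm
    _ ≤ ∫⁻ y, (ball (0 : E) (2 * R)).indicator h (x - y) ∂μ := setLIntegral_le_lintegral _ _
    _ = ∫⁻ z in ball (0 : E) (2 * R), h z ∂μ := by
        rw [lintegral_sub_left_eq_self, lintegral_indicator measurableSet_ball]

variable [NormedSpace ℝ E] [FiniteDimensional ℝ E] [μ.IsAddHaarMeasure] {β : ℝ}

lemma lintegral_ball_norm_rpow_neg_lt_top (hdim : 1 ≤ Module.finrank ℝ E)
    (hβ : β < Module.finrank ℝ E) (ρ : ℝ) :
    ∫⁻ x in ball (0 : E) ρ, ENNReal.ofReal (‖x‖ ^ (-β)) ∂μ < ⊤ :=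
  IntegrableOn.setLIntegral_lt_top <| integrableOn_ball_of_norm_le_rpow (C := 1) hdim hβ
    (ae_of_all _ fun x => by simp [abs_of_nonneg (Real.rpow_nonneg (norm_nonneg x) _)])
    (measurable_norm.pow_const _).aestronglyMeasurable

lemma lintegral_ball_lintegral_ball_lt_top_of_le {F : E → E → ℝ} {C : ℝ}
    (hdim : 1 ≤ Module.finrank ℝ E) (hβ : β < Module.finrank ℝ E)
    (hF : ∀ x y, x ≠ 0 → y ≠ 0 → F x y ≤ C * (‖x‖ ^ (-β) * (‖x - y‖ ^ (-β) + ‖y‖ ^ (-β))))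
    (R : ℝ) :
    ∫⁻ x in ball (0 : E) R, ∫⁻ y in ball (0 : E) R, ENNReal.ofReal (F x y) ∂μ ∂μ < ⊤ := by
  have : Nontrivial E := Module.nontrivial_of_finrank_pos (R := ℝ) (by omega)
  set g : E → ℝ≥0∞ := fun z => ENNReal.ofReal (‖z‖ ^ (-β))
  have hg : Measurable g := by fun_prop
  set J : ℝ → ℝ≥0∞ := fun ρ => ∫⁻ z in ball (0 : E) ρ, g z ∂μ
  have hne : ∀ᵐ z ∂μ.restrict (ball (0 : E) R), z ≠ 0 :=
    ae_restrict_of_ae (compl_mem_ae_iff.2 (measure_singleton 0))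
  have hpt : ∀ x ≠ 0, ∀ y ≠ 0,
      ENNReal.ofReal (F x y) ≤ ENNReal.ofReal C * g x * (g (x - y) + g y) := fun x hx y hy => by
    refine (ENNReal.ofReal_le_ofReal (hF x y hx hy)).trans_eq ?_
    rw [ENNReal.ofReal_mul' (by positivity), ENNReal.ofReal_mul (by positivity),
      ENNReal.ofReal_add (by positivity) (by positivity), mul_assoc]
  have hinner : ∀ x ∈ ball (0 : E) R, x ≠ 0 →
      ∫⁻ y in ball (0 : E) R, ENNReal.ofReal (F x y) ∂μ ≤
        ENNReal.ofReal C * g x * (J (2 * R) + J R) := fun x hxR hx =>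
    calc ∫⁻ y in ball (0 : E) R, ENNReal.ofReal (F x y) ∂μ
        ≤ ∫⁻ y in ball (0 : E) R, ENNReal.ofReal C * g x * (g (x - y) + g y) ∂μ :=
          lintegral_mono_ae <| hne.mono fun y hy => hpt x hx y hy
      _ = ENNReal.ofReal C * g x * (∫⁻ y in ball (0 : E) R, g (x - y) ∂μ + J R) := by
          rw [lintegral_const_mul' _ _ (by finiteness), lintegral_add_right _ hg]
      _ ≤ ENNReal.ofReal C * g x * (J (2 * R) + J R) := by
          gcongr
          exact setLIntegral_ball_sub_le g hxR
  calc ∫⁻ x in ball (0 : E) R, ∫⁻ y in ball (0 : E) R, ENNReal.ofReal (F x y) ∂μ ∂μ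
      ≤ ∫⁻ x in ball (0 : E) R, ENNReal.ofReal C * g x * (J (2 * R) + J R) ∂μ := by
        refine lintegral_mono_ae ?_
        filter_upwards [hne, ae_restrict_mem measurableSet_ball] with x hx hxR
        exact hinner x hxR hx
    _ = ENNReal.ofReal C * J R * (J (2 * R) + J R) := by
        rw [lintegral_mul_const _ (hg.const_mul _), lintegral_const_mul _ hg]
    _ < ⊤ := by
        have hJ := lintegral_ball_norm_rpow_neg_lt_top (μ := μ) hdim hβ
        exact ENNReal.mul_lt_top (ENNReal.mul_lt_top ENNReal.ofReal_lt_top (hJ R))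
          (ENNReal.add_lt_top.2 ⟨hJ _, hJ R⟩)

lemma lintegral_ball_norm_inv_pow_smul_rpow_lt_top (n : ℕ) {p : ℝ}
    (hdim : 1 ≤ Module.finrank ℝ E) (hp : 0 ≤ p) (hnp : (n - 1) * p < Module.finrank ℝ E) (ρ : ℝ) :
    ∫⁻ x in ball (0 : E) ρ, ENNReal.ofReal (‖(‖x‖ ^ n)⁻¹ • x‖ ^ p) ∂μ < ⊤ := by
  refine IntegrableOn.setLIntegral_lt_top <| integrableOn_ball_of_norm_le_rpow (C := 1) hdim hnp
    (ae_of_all _ fun x => ?_) (by fun_prop)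
  rw [Real.norm_of_nonneg (by positivity), one_mul,
    show -((n - 1 : ℝ) * p) = (1 - n) * p by ring, Real.rpow_mul (norm_nonneg x)]
  gcongr
  exact norm_inv_pow_smul_le n x

end BallIntegrals

/-- The singular kernel `K(x) = x/|x|^d` belongs to the local
fractional Sobolev space `W^{α,p}_loc(ℝ^d;ℝ^d)` for every `α ∈ (0,1)` and
`p ∈ [1, d/(d−1+α))`: for every `R > 0`, `K ∈ L^p(B_R)` and the Gagliardo seminorm
`∫_{B_R}∫_{B_R} |K(x)−K(y)|^p / |x−y|^{d+αp} dx dy` is finite. -/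
theorem singular_kernel_in_fractional_sobolev
    (d : ℕ) (hd : 2 ≤ d) (α : ℝ) (hα : α ∈ Ioo (0:ℝ) 1)
    (p : ℝ) (hp : 1 ≤ p) (hp' : p < d / ((d : ℝ) - 1 + α)) :
    ∀ R > (0:ℝ),
      (∫⁻ x in ball (0 : Ed d) R, ENNReal.ofReal (‖kern d x‖ ^ p)) ≠ ⊤ ∧
      (∫⁻ x in ball (0 : Ed d) R, ∫⁻ y in ball (0 : Ed d) R,
        ENNReal.ofReal (‖kern d x - kern d y‖ ^ p / ‖x - y‖ ^ ((d : ℝ) + α * p))) ≠ ⊤ := by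
  intro R _
  obtain ⟨hα0, hα1⟩ := hα
  have hdim : 1 ≤ Module.finrank ℝ (Ed d) := by rw [finrank_euclideanSpace_fin]; omega
  have hd2 : (2 : ℝ) ≤ d := by exact_mod_cast hd
  have hpd : p * (d - 1 + α) < d := (lt_div_iff₀ (by linarith)).1 hp'
  constructor
  · refine (lintegral_ball_norm_inv_pow_smul_rpow_lt_top d hdim (by linarith) ?_ R).ne
    rw [finrank_euclideanSpace_fin]
    nlinarith
  · obtain ⟨C, hC⟩ := exists_norm_inv_pow_smul_sub_rpow_div_le (E := Ed d) d
      (p := p) (m := d + α * p) (β := (d + p * (d - 1 + α)) / 2) (by linarith) (by nlinarith)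
      (by nlinarith) (by nlinarith) (by ring)
    refine (lintegral_ball_lintegral_ball_lt_top_of_le hdim ?_ hC R).ne
    rw [finrank_euclideanSpace_fin]
    linarith

end
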